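/- Let F : (0,1) → ℝ be Cardy's function F(r) = (Γ(2/3)/Γ(1/3)²) ∫_r^1 s^{−2/3}(1−s)^{−2/3} ds. Fix real numbers x < y. Then, as (y₋, y₊) → (y, y) within the region {(y₋, y₊) : x < y₋ < y₊}, the quantity 6·(Γ(2/3)/Γ(1/3)²)·r^{−2/3}(1−r)^{−2/3}·(y₊ − y₋) / ((y₊ − x)² · F(r)), where r = (y₋ − x)/(y₊ − x), converges to −2/(x−y). (This quantity equals 6·∂/∂x of log F((y₋−x)/(y₊−x)), the drift of chordal SLE₆ conditioned on Cardy's crossing event, and the limit is the drift of SLE₆(ρ=−2).) -/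

import Mathlib

/-!
Writing `r = (y₋ - x)/(y₊ - x)`, one has `y₊ - y₋ = (1 - r)(y₊ - x)`, so the drift equals
`6 r^{-2/3} (1 - r)^{1/3} / ((y₊ - x) ∫_r^1 s^{-2/3}(1-s)^{-2/3} ds)`; the Gamma constants cancel.
As `y₋, y₊ → y` we have `r → 1⁻`, and since `s^{-2/3}` lies between `1` and `r^{-2/3}` on `[r, 1]`,
the integral is squeezed between `3(1-r)^{1/3}` and `3 r^{-2/3} (1-r)^{1/3}`.
Hence the drift tends to `6 · (1/3) / (y - x) = -2/(x - y)`.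
-/

/-- Cardy's crossing-probability function. -/
noncomputable def F16 (r : ℝ) : ℝ :=
  Real.Gamma (2 / 3) / (Real.Gamma (1 / 3)) ^ 2 *
    ∫ s in r..(1 : ℝ), s ^ (-(2 : ℝ) / 3) * (1 - s) ^ (-(2 : ℝ) / 3)

open MeasureTheory Set Filter Topology

noncomputable def betaTail (a b r : ℝ) : ℝ :=
  ∫ s in r..1, s ^ a * (1 - s) ^ b

section BetaTail

variable {a b : ℝ}

theorem integral_one_sub_rpow (hb : -1 < b) (r : ℝ) :
    ∫ s in r..1, (1 - s) ^ b = (1 - r) ^ (b + 1) / (b + 1) := by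
  have hb1 : b + 1 ≠ 0 := by linarith
  rw [intervalIntegral.integral_comp_sub_left (fun u => u ^ b) 1, integral_rpow (Or.inl hb),
    sub_self, Real.zero_rpow hb1, sub_zero]

theorem intervalIntegrable_one_sub_rpow (hb : -1 < b) (r : ℝ) :
    IntervalIntegrable (fun s => (1 - s) ^ b) volume r 1 := by
  simpa using
    (intervalIntegral.intervalIntegrable_rpow' hb (a := 1 - r) (b := 1 - 1)).comp_sub_left 1

theorem intervalIntegrable_rpow_mul_one_sub_rpow (hb : -1 < b) {r : ℝ} (hr : 0 < r) :
    IntervalIntegrable (fun s => s ^ a * (1 - s) ^ b) volume r 1 := by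
  refine (intervalIntegrable_one_sub_rpow hb r).continuousOn_mul fun s hs => ?_
  have hs0 : 0 < s := (lt_min hr one_pos).trans_le hs.1
  exact (Real.continuousAt_rpow_const s a (Or.inl hs0.ne')).continuousWithinAt

theorem le_betaTail (ha : a ≤ 0) (hb : -1 < b) {r : ℝ} (hr : r ∈ Ioo (0 : ℝ) 1) :
    (1 - r) ^ (b + 1) / (b + 1) ≤ betaTail a b r := by
  rw [← integral_one_sub_rpow hb]
  refine intervalIntegral.integral_mono_on hr.2.le (intervalIntegrable_one_sub_rpow hb r)
    (intervalIntegrable_rpow_mul_one_sub_rpow hb hr.1) fun s hs => ?_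
  have hs0 : 0 < s := hr.1.trans_le hs.1
  have h1 : 1 ≤ s ^ a := Real.one_le_rpow_of_pos_of_le_one_of_nonpos hs0 hs.2 ha
  exact le_mul_of_one_le_left (Real.rpow_nonneg (by linarith [hs.2]) _) h1

theorem betaTail_le (ha : a ≤ 0) (hb : -1 < b) {r : ℝ} (hr : r ∈ Ioo (0 : ℝ) 1) :
    betaTail a b r ≤ r ^ a * ((1 - r) ^ (b + 1) / (b + 1)) := by
  rw [← integral_one_sub_rpow hb, ← intervalIntegral.integral_const_mul]
  refine intervalIntegral.integral_mono_on hr.2.le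
    (intervalIntegrable_rpow_mul_one_sub_rpow hb hr.1)
    ((intervalIntegrable_one_sub_rpow hb r).const_mul _) fun s hs => ?_
  exact mul_le_mul_of_nonneg_right (Real.rpow_le_rpow_of_nonpos hr.1 hs.1 ha)
    (Real.rpow_nonneg (by linarith [hs.2]) _)

theorem tendsto_one_sub_rpow_div_betaTail (ha : a ≤ 0) (hb : -1 < b) :
    Tendsto (fun r => (1 - r) ^ (b + 1) / betaTail a b r) (𝓝[<] 1) (𝓝 (b + 1)) := by
  have hb1 : 0 < b + 1 := by linarith
  have hIoo : ∀ᶠ r in 𝓝[<] (1 : ℝ), r ∈ Ioo (0 : ℝ) 1 := Ioo_mem_nhdsLT one_pos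
  have hlower : Tendsto (fun r : ℝ => (b + 1) / r ^ a) (𝓝[<] 1) (𝓝 (b + 1)) := by
    have hc : ContinuousAt (fun r : ℝ => (b + 1) / r ^ a) 1 :=
      continuousAt_const.div (Real.continuousAt_rpow_const 1 a (Or.inl one_ne_zero)) (by simp)
    simpa using hc.tendsto.mono_left nhdsWithin_le_nhds
  refine tendsto_of_tendsto_of_tendsto_of_le_of_le' hlower tendsto_const_nhds ?_ ?_
  all_goals
    filter_upwards [hIoo] with r hr
    have hT : 0 < (1 - r) ^ (b + 1) := Real.rpow_pos_of_pos (by linarith [hr.2]) _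
    have hI : 0 < betaTail a b r := (div_pos hT hb1).trans_le (le_betaTail ha hb hr)
    have hra : 0 < r ^ a := Real.rpow_pos_of_pos hr.1 a
  · rw [div_le_div_iff₀ hra hI]
    have := betaTail_le ha hb hr
    rw [mul_div_assoc', le_div_iff₀ hb1] at this
    linarith
  · rw [div_le_iff₀ hI]
    have := le_betaTail ha hb hr
    rw [div_le_iff₀ hb1] at this
    linarith

end BetaTail

theorem sub_div_sub_lt_one {x u v : ℝ} (hxu : x < u) (huv : u < v) : (u - x) / (v - x) < 1 :=
  (div_lt_one (by linarith)).mpr (by linarith)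

theorem cardy_drift_eq {C r t I a b : ℝ} (hC : C ≠ 0) (hr : r < 1) (ht : t ≠ 0) :
    6 * C * r ^ a * (1 - r) ^ b * ((1 - r) * t) / (t ^ 2 * (C * I))
      = 6 * r ^ a * ((1 - r) ^ (b + 1) / I) / t := by
  rw [Real.rpow_add_one (sub_ne_zero.mpr hr.ne')]
  field_simp

theorem tendsto_scaled_cardy_drift :
    Tendsto (fun r : ℝ => 6 * r ^ (-(2 : ℝ) / 3)
        * ((1 - r) ^ (-(2 : ℝ) / 3 + 1) / betaTail (-(2 : ℝ) / 3) (-(2 : ℝ) / 3) r))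
      (𝓝[<] 1) (𝓝 2) := by
  have hpow : Tendsto (fun r : ℝ => r ^ (-(2 : ℝ) / 3)) (𝓝[<] 1) (𝓝 1) := by
    simpa using (Real.continuousAt_rpow_const 1 (-(2 : ℝ) / 3)
      (Or.inl one_ne_zero)).tendsto.mono_left nhdsWithin_le_nhds
  have := (hpow.const_mul 6).mul (tendsto_one_sub_rpow_div_betaTail
    (a := -(2 : ℝ) / 3) (b := -(2 : ℝ) / 3) (by norm_num) (by norm_num))
  convert this using 2
  norm_num

/-- As `(y₋,y₊) → (y,y)` within `{x < y₋ < y₊}`, the drift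
`6 ∂ₓ log F((y₋-x)/(y₊-x))` of chordal SLE₆ conditioned on Cardy's crossing
event converges to `-2/(x-y)`, the drift of SLE₆(ρ=-2). -/
theorem stmt_16 (x y : ℝ) (hxy : x < y) :
    Filter.Tendsto
      (fun p : ℝ × ℝ =>
        6 * (Real.Gamma (2 / 3) / (Real.Gamma (1 / 3)) ^ 2)
            * ((p.1 - x) / (p.2 - x)) ^ (-(2 : ℝ) / 3)
            * (1 - (p.1 - x) / (p.2 - x)) ^ (-(2 : ℝ) / 3)
            * (p.2 - p.1)
          / ((p.2 - x) ^ 2 * F16 ((p.1 - x) / (p.2 - x))))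
      (nhdsWithin (y, y) {p : ℝ × ℝ | x < p.1 ∧ p.1 < p.2})
      (nhds (-2 / (x - y))) := by
  set S := {p : ℝ × ℝ | x < p.1 ∧ p.1 < p.2}
  have hyx : y - x ≠ 0 := sub_ne_zero.mpr hxy.ne'
  have hC : Real.Gamma (2 / 3) / Real.Gamma (1 / 3) ^ 2 ≠ 0 :=
    (div_pos (Real.Gamma_pos_of_pos (by norm_num))
      (pow_pos (Real.Gamma_pos_of_pos (by norm_num)) 2)).ne'
  have hratio : Tendsto (fun p : ℝ × ℝ => (p.1 - x) / (p.2 - x)) (𝓝[S] (y, y)) (𝓝[<] 1) := by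
    refine tendsto_nhdsWithin_iff.mpr ⟨?_, eventually_mem_nhdsWithin.mono fun p ⟨hx1, h12⟩ => ?_⟩
    · have hc : ContinuousAt (fun p : ℝ × ℝ => (p.1 - x) / (p.2 - x)) (y, y) :=
        ContinuousAt.div (by fun_prop) (by fun_prop) hyx
      simpa [div_self hyx] using hc.tendsto.mono_left nhdsWithin_le_nhds
    · exact sub_div_sub_lt_one hx1 h12
  have hscale : Tendsto (fun p : ℝ × ℝ => p.2 - x) (𝓝[S] (y, y)) (𝓝 (y - x)) :=
    ((continuous_snd.sub continuous_const).tendsto (y, y)).mono_left nhdsWithin_le_nhds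
  have hlim : -2 / (x - y) = 2 / (y - x) := by rw [← neg_sub y x, div_neg, neg_div, neg_neg]
  rw [hlim]
  refine ((tendsto_scaled_cardy_drift.comp hratio).div hscale hyx).congr' ?_
  filter_upwards [eventually_mem_nhdsWithin] with p ⟨hx1, h12⟩
  have ht : p.2 - x ≠ 0 := by linarith
  have hgap : p.2 - p.1 = (1 - (p.1 - x) / (p.2 - x)) * (p.2 - x) := by field_simp; ring
  rw [hgap, F16, ← betaTail, cardy_drift_eq hC (sub_div_sub_lt_one hx1 h12) ht]
  rfl
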